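/- arXiv:1301.4653 — 4 statements merged into one kernel-verified Lean document; each statement's English description precedes it below -/
import Mathlib

section
/- For every λ ∈ P_ε(N), setting c(λ) := s(λ) + |Δ(λ)|: (1) c(λ) ≥ z(λ); (2) c(λ) = z(λ) if and only if λ is non-singular. Equivalently, |Δ_bad(λ)| ≥ |Σ(λ)| always, with equality if and only if λ has no bad 2-step. -/
open Finset

/-- `lam` (with parts `lam 1 ≥ lam 2 ≥ … ≥ lam n ≥ 1`, and `lam i = 0` for `i = 0` and
`i > n`) is a partition of `N` belonging to `𝒫_ε(N)`: every part `v` with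
`ε·(−1)^v = 1` occurs with even multiplicity. -/
structure KSPartition (ε : ℤ) (N n : ℕ) (lam : ℕ → ℕ) : Prop where
  zero : lam 0 = 0
  pos : ∀ i : ℕ, 1 ≤ i → i ≤ n → 1 ≤ lam i
  mono : ∀ i : ℕ, 1 ≤ i → lam (i + 1) ≤ lam i
  top : ∀ i : ℕ, n < i → lam i = 0
  sum_eq : ∑ i ∈ Finset.Icc 1 n, lam i = N
  parity : ∀ v : ℕ, 1 ≤ v → ε * (-1 : ℤ) ^ v = 1 →
    Even (((Finset.Icc 1 n).filter (fun i => lam i = v)).card)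

/-- `(i, i+1)` is a 2-step of `lam`. -/
def IsTwoStep (ε : ℤ) (lam : ℕ → ℕ) (i : ℕ) : Prop :=
  1 ≤ i ∧ 1 ≤ lam (i + 1) ∧ lam (i + 1) ≤ lam i ∧
    ε * (-1 : ℤ) ^ lam i = -1 ∧ ε * (-1 : ℤ) ^ lam (i + 1) = -1 ∧
    lam (i - 1) ≠ lam i ∧ lam (i + 1) ≠ lam (i + 2)

/-- `Δ(λ)`, the set of 2-steps of `lam` (a 2-step `(i,i+1)` is recorded by its index `i`). -/
def twoSteps (ε : ℤ) (lam : ℕ → ℕ) : Set ℕ := {i | IsTwoStep ε lam i}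

/-- `s(λ) = Σ_i ⌊(λ_i − λ_{i+1})/2⌋`. -/
def sVal (lam : ℕ → ℕ) (n : ℕ) : ℕ :=
  ∑ i ∈ Finset.Icc 1 n, (lam i - lam (i + 1)) / 2

/-- The badness condition for a 2-step `(i, i+1)`. -/
def IsBadStep (lam : ℕ → ℕ) (i : ℕ) : Prop :=
  (1 < i ∧ Even (lam (i - 1) - lam i)) ∨ Even (lam (i + 1) - lam (i + 2))

/-- `Δ_bad(λ)`, the set of bad 2-steps of `lam`. -/
def badSteps (ε : ℤ) (lam : ℕ → ℕ) : Set ℕ :=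
  {i | IsTwoStep ε lam i ∧ IsBadStep lam i}

/-- `lam` is non-singular: it has no bad 2-step. -/
def NonSingular (ε : ℤ) (lam : ℕ → ℕ) : Prop :=
  ∀ i : ℕ, IsTwoStep ε lam i → ¬ IsBadStep lam i

/-- The 2-cluster `a, a+2, …, a+2(k−1)` (with `k ≥ 2` members) of `lam`. -/
def IsTwoCluster (ε : ℤ) (lam : ℕ → ℕ) (a k : ℕ) : Prop :=
  2 ≤ k ∧ ∀ j : ℕ, j < k → IsTwoStep ε lam (a + 2 * j)

/-- The 2-cluster `a, a+2, …, a+2(k−1)` has a bad boundary. -/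
def HasBadBoundary (lam : ℕ → ℕ) (a k : ℕ) : Prop :=
  (1 < a ∧ 0 < lam (a - 1) - lam a ∧ Even (lam (a - 1) - lam a)) ∨
  (0 < lam (a + 2 * (k - 1) + 1) - lam (a + 2 * (k - 1) + 2) ∧
    Even (lam (a + 2 * (k - 1) + 1) - lam (a + 2 * (k - 1) + 2)))

/-- `Σ(λ)`: the set of good 2-clusters of `lam`, a cluster being recorded as the pair
`(a, k)` of its first index and its number of members. -/
def goodClusters (ε : ℤ) (lam : ℕ → ℕ) : Set (ℕ × ℕ) :=
  {p | IsTwoCluster ε lam p.1 p.2 ∧ ¬ HasBadBoundary lam p.1 p.2}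

/-- `z(λ) = s(λ) + |Δ(λ)| − (|Δ_bad(λ)| − |Σ(λ)|)`, computed in `ℤ`. -/
noncomputable def zVal (ε : ℤ) (lam : ℕ → ℕ) (n : ℕ) : ℤ :=
  (sVal lam n : ℤ) + ((twoSteps ε lam).ncard : ℤ) + ((goodClusters ε lam).ncard : ℤ)
    - ((badSteps ε lam).ncard : ℤ)

/-- One step of the Kempken–Spaltenstein algorithm at index `i`
(Case 1 if `λ_i − λ_{i+1} ≥ 2`, Case 2 otherwise). -/
def ksOut (lam : ℕ → ℕ) (i : ℕ) : ℕ → ℕ := fun j =>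
  if lam (i + 1) + 2 ≤ lam i then (if j ≤ i then lam j - 2 else lam j)
  else (if j < i then lam j - 2 else if j ≤ i + 1 then lam j - 1 else lam j)

/-- The index `i` is admissible for `lam` (Case 1 or Case 2 occurs at `i`). -/
def IsAdmissibleIndex (ε : ℤ) (lam : ℕ → ℕ) (i : ℕ) : Prop :=
  (1 ≤ i ∧ lam (i + 1) + 2 ≤ lam i) ∨ (IsTwoStep ε lam i ∧ lam i = lam (i + 1))

/-- `λ^𝐢`: the result of applying the KS algorithm along the sequence `𝐢`. -/
def ksApply (lam : ℕ → ℕ) : List ℕ → ℕ → ℕ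
  | [] => lam
  | i :: rest => ksApply (ksOut lam i) rest

/-- The sequence `𝐢` is admissible for `lam`. -/
def IsAdmissibleSeq (ε : ℤ) (lam : ℕ → ℕ) : List ℕ → Prop
  | [] => True
  | i :: rest => IsAdmissibleIndex ε lam i ∧ IsAdmissibleSeq ε (ksOut lam i) rest

/-- The sequence `𝐢` is maximal admissible for `lam`. -/
def IsMaximalAdmissibleSeq (ε : ℤ) (lam : ℕ → ℕ) (l : List ℕ) : Prop :=
  IsAdmissibleSeq ε lam l ∧ ∀ i : ℕ, ¬ IsAdmissibleIndex ε (ksApply lam l) i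

/-- `lam` is a rigid partition. -/
def IsRigid (ε : ℤ) (lam : ℕ → ℕ) : Prop :=
  (∀ i : ℕ, 1 ≤ i → lam i ≤ lam (i + 1) + 1) ∧
  ∀ i : ℕ, ¬ (IsTwoStep ε lam i ∧ lam i = lam (i + 1))

section Aux

variable {ε : ℤ} {N n : ℕ} {lam : ℕ → ℕ}

lemma aux_parity (hε : ε = 1 ∨ ε = -1) {a b : ℕ}
    (ha : ε * (-1 : ℤ) ^ a = -1) (hb : ε * (-1 : ℤ) ^ b = -1) : (Even a ↔ Even b) := by
  have h : (-1 : ℤ) ^ a = (-1 : ℤ) ^ b := by rcases hε with rfl | rfl <;> linarith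
  rcases Nat.even_or_odd a with ea | oa <;> rcases Nat.even_or_odd b with eb | ob
  · exact iff_of_true ea eb
  · rw [ea.neg_one_pow, ob.neg_one_pow] at h; norm_num at h
  · rw [oa.neg_one_pow, eb.neg_one_pow] at h; norm_num at h
  · exact iff_of_false (Nat.not_even_iff_odd.mpr oa) (Nat.not_even_iff_odd.mpr ob)

lemma aux_bad_right (hε : ε = 1 ∨ ε = -1) (hlam : KSPartition ε N n lam) {i : ℕ}
    (h1 : IsTwoStep ε lam i) (h2 : IsTwoStep ε lam (i + 2)) : IsBadStep lam i := by
  right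
  rw [Nat.even_sub (hlam.mono (i + 1) (by omega))]
  exact aux_parity hε h1.2.2.2.2.1 h2.2.2.2.1

lemma aux_bad_left (hε : ε = 1 ∨ ε = -1) (hlam : KSPartition ε N n lam) {i : ℕ}
    (h1 : IsTwoStep ε lam i) (h2 : IsTwoStep ε lam (i + 2)) : IsBadStep lam (i + 2) := by
  left
  refine ⟨by omega, ?_⟩
  have he : i + 2 - 1 = i + 1 := rfl
  rw [he, Nat.even_sub (hlam.mono (i + 1) (by omega))]
  exact aux_parity hε h1.2.2.2.2.1 h2.2.2.2.1

lemma aux_boundary_right (hε : ε = 1 ∨ ε = -1) (hlam : KSPartition ε N n lam) {a k : ℕ}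
    (hc : IsTwoCluster ε lam a k) (h2 : IsTwoStep ε lam (a + 2 * k)) :
    HasBadBoundary lam a k := by
  right
  have hk2 : 2 ≤ k := hc.1
  have h1 : IsTwoStep ε lam (a + 2 * (k - 1)) := hc.2 (k - 1) (by omega)
  have hi2 : a + 2 * (k - 1) + 2 = a + 2 * k := by omega
  have hi1 : a + 2 * (k - 1) + 1 = a + 2 * k - 1 := by omega
  have hle : lam (a + 2 * (k - 1) + 2) ≤ lam (a + 2 * (k - 1) + 1) :=
    hlam.mono (a + 2 * (k - 1) + 1) (by omega)
  have hne : lam (a + 2 * (k - 1) + 1) ≠ lam (a + 2 * (k - 1) + 2) := by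
    rw [hi1, hi2]; exact h2.2.2.2.2.2.1
  constructor
  · omega
  · rw [Nat.even_sub hle]
    have := h2.2.2.2.1
    rw [← hi2] at this
    exact aux_parity hε h1.2.2.2.2.1 this

lemma aux_step_mem (hlam : KSPartition ε N n lam) {i : ℕ} (h : IsTwoStep ε lam i) :
    i ∈ Set.Icc 1 n := by
  refine ⟨h.1, ?_⟩
  by_contra hn
  have := hlam.top (i + 1) (by omega)
  have := h.2.1
  omega

end Aux

/-- For every `λ ∈ 𝒫_ε(N)`, with `c(λ) := s(λ) + |Δ(λ)|`: (1) `c(λ) ≥ z(λ)`;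
(2) `c(λ) = z(λ)` iff `λ` is non-singular. Equivalently, `|Δ_bad(λ)| ≥ |Σ(λ)|` always,
with equality iff `λ` has no bad 2-step. -/
theorem stmt15 (ε : ℤ) (hε : ε = 1 ∨ ε = -1) (N n : ℕ) (lam : ℕ → ℕ)
    (hlam : KSPartition ε N n lam) :
    (zVal ε lam n ≤ (sVal lam n : ℤ) + ((twoSteps ε lam).ncard : ℤ)) ∧
    (zVal ε lam n = (sVal lam n : ℤ) + ((twoSteps ε lam).ncard : ℤ) ↔
      NonSingular ε lam) ∧
    ((goodClusters ε lam).ncard ≤ (badSteps ε lam).ncard) ∧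
    ((badSteps ε lam).ncard = (goodClusters ε lam).ncard ↔ NonSingular ε lam) := by
  set G := goodClusters ε lam with hG
  set B := badSteps ε lam with hB
  -- finiteness
  have hBfin : B.Finite := by
    apply (Set.finite_Icc 1 n).subset
    rintro i ⟨hi, _⟩
    exact aux_step_mem hlam hi
  have hGfin : G.Finite := by
    apply ((Set.finite_Icc 1 n).prod (Set.finite_Icc 2 (n + 1))).subset
    rintro ⟨a, k⟩ ⟨hc, _⟩
    have hk2 : 2 ≤ k := hc.1
    have h0 : IsTwoStep ε lam (a + 2 * 0) := hc.2 0 (by omega)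
    have hk : IsTwoStep ε lam (a + 2 * (k - 1)) := hc.2 (k - 1) (by omega)
    have m0 := aux_step_mem hlam h0
    have mk := aux_step_mem hlam hk
    simp only [Set.mem_Icc, Set.mem_prod] at *
    omega
  -- good clusters end maximally on the right
  have hmaxr : ∀ p : ℕ × ℕ, p ∈ G → ¬ IsTwoStep ε lam (p.1 + 2 * p.2) := by
    rintro ⟨a, k⟩ ⟨hc, hgood⟩ hstep
    exact hgood (aux_boundary_right hε hlam hc hstep)
  have hk2G : ∀ p : ℕ × ℕ, p ∈ G → 2 ≤ p.2 := fun p hp => hp.1.1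
  -- injectivity of first projection on G
  have hinj : Set.InjOn Prod.fst G := by
    rintro ⟨a, k⟩ hak ⟨a', k'⟩ hak' (h : a = a')
    subst h
    by_contra hne
    have hkk : k ≠ k' := by simpa using hne
    rcases Nat.lt_or_ge k k' with hlt | hge
    · exact hmaxr _ hak (hak'.1.2 k hlt)
    · exact hmaxr _ hak' (hak.1.2 k' (by omega))
  -- the first index of a good cluster is a bad step
  have himg : Prod.fst '' G ⊆ B := by
    rintro i ⟨⟨a, k⟩, ⟨hc, _⟩, rfl⟩
    have hk2 : 2 ≤ k := hc.1
    have h0 : IsTwoStep ε lam (a + 2 * 0) := hc.2 0 (by omega)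
    have h1 : IsTwoStep ε lam (a + 2 * 1) := hc.2 1 hc.1
    rw [mul_zero, add_zero] at h0
    rw [mul_one] at h1
    exact ⟨h0, aux_bad_right hε hlam h0 h1⟩
  have hcard : G.ncard ≤ B.ncard := by
    rw [← Set.ncard_image_of_injOn hinj]
    exact Set.ncard_le_ncard himg hBfin
  -- NonSingular implies both sets empty
  have hns_empty : NonSingular ε lam → B = ∅ ∧ G = ∅ := by
    intro hns
    constructor
    · ext i; simp only [Set.mem_empty_iff_false, iff_false]
      rintro ⟨hstep, hbad⟩; exact hns i hstep hbad
    · ext p; simp only [Set.mem_empty_iff_false, iff_false]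
      rintro ⟨hc, _⟩
      have hk2 : 2 ≤ p.2 := hc.1
      have h0 : IsTwoStep ε lam (p.1 + 2 * 0) := hc.2 0 (by omega)
      have h1 : IsTwoStep ε lam (p.1 + 2 * 1) := hc.2 1 hc.1
      rw [mul_zero, add_zero] at h0
      rw [mul_one] at h1
      exact hns p.1 h0 (aux_bad_right hε hlam h0 h1)
  -- card equality implies NonSingular
  have hmain : B.ncard = G.ncard ↔ NonSingular ε lam := by
    constructor
    · intro heq
      have himgeq : Prod.fst '' G = B := by
        apply Set.eq_of_subset_of_ncard_le himg _ hBfin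
        rw [Set.ncard_image_of_injOn hinj]; exact heq.le
      intro i hstep hbad
      have hiB : i ∈ B := ⟨hstep, hbad⟩
      rw [← himgeq] at hiB
      obtain ⟨⟨a, k⟩, hGmem, (rfl : a = i)⟩ := hiB
      have hc := hGmem.1
      have hk2 : 2 ≤ k := hc.1
      set t := a + 2 * (k - 1) with ht
      have hprev : IsTwoStep ε lam (a + 2 * (k - 2)) := hc.2 (k - 2) (by omega)
      have hlast : IsTwoStep ε lam t := hc.2 (k - 1) (by omega)
      have he : a + 2 * (k - 2) + 2 = t := by omega
      have htbad : IsBadStep lam t := by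
        rw [← he]
        rw [← he] at hlast
        exact aux_bad_left hε hlam hprev hlast
      have htB : t ∈ B := ⟨hlast, htbad⟩
      rw [← himgeq] at htB
      obtain ⟨⟨a2, k2⟩, hGmem2, hfst2⟩ := htB
      have ha2 : a2 = t := hfst2
      have hnext : IsTwoStep ε lam (a2 + 2 * 1) :=
        hGmem2.1.2 1 (by have := hGmem2.1.1; omega)
      rw [mul_one] at hnext
      have he2 : a2 + 2 = a + 2 * k := by omega
      rw [he2] at hnext
      exact hmaxr _ hGmem hnext
    · intro hns
      rcases hns_empty hns with ⟨hB0, hG0⟩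
      rw [hB0, hG0]
      simp
  refine ⟨?_, ?_, hcard, hmain⟩
  · unfold zVal
    rw [← hG, ← hB]
    omega
  · unfold zVal
    rw [← hG, ← hB]
    rw [← hmain]
    omega
end

section
/- Define κ(λ) ∈ (ℤ/2ℤ)^ℕ by κ(λ)_i := λ_i − λ_{i+1} mod 2 for all i ≥ 1. Let M, N ∈ ℕ. If μ ∈ P_ε(M) and λ ∈ P_ε(N) are both rigid partitions, then μ = λ if and only if κ(μ) = κ(λ). -/
open Finset

/-- Rigid partitions `μ ∈ 𝒫_ε(M)` and `λ ∈ 𝒫_ε(N)` are equal if and only if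
`κ(μ) = κ(λ)`, where `κ(λ)_i := λ_i − λ_{i+1} mod 2`. -/
theorem stmt16 (ε : ℤ) (hε : ε = 1 ∨ ε = -1) (M N m n : ℕ)
    (mu lam : ℕ → ℕ)
    (hmu : KSPartition ε M m mu) (hlam : KSPartition ε N n lam)
    (hrm : IsRigid ε mu) (hrl : IsRigid ε lam) :
    mu = lam ↔
      ∀ i : ℕ, 1 ≤ i → (mu i - mu (i + 1)) % 2 = (lam i - lam (i + 1)) % 2 := by
  constructor
  · intro h i _; rw [h]
  · intro hk
    have hdiff : ∀ i : ℕ, 1 ≤ i → mu i - mu (i + 1) = lam i - lam (i + 1) := by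
      intro i hi
      have h1 : mu i ≤ mu (i + 1) + 1 := hrm.1 i hi
      have h2 : lam i ≤ lam (i + 1) + 1 := hrl.1 i hi
      have h3 : mu i - mu (i + 1) ≤ 1 := by omega
      have h4 : lam i - lam (i + 1) ≤ 1 := by omega
      have := hk i hi
      omega
    have step : ∀ i : ℕ, 1 ≤ i → mu (i + 1) = lam (i + 1) → mu i = lam i := by
      intro i hi h
      have := hdiff i hi
      have hm := hmu.mono i hi
      have hl := hlam.mono i hi
      omega
    have h0 : ∀ i : ℕ, max m n < i → mu i = lam i := by
      intro i hi
      rw [hmu.top i (by omega), hlam.top i (by omega)]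
    have key : ∀ j i : ℕ, max m n < i + j → mu i = lam i := by
      intro j
      induction j with
      | zero => intro i hi; exact h0 i (by omega)
      | succ j ih =>
        intro i hi
        rcases Nat.lt_or_ge (max m n) i with h | h
        · exact h0 i h
        · rcases Nat.eq_zero_or_pos i with rfl | hi1
          · rw [hmu.zero, hlam.zero]
          · exact step i hi1 (ih (i + 1) (by omega))
    funext i
    exact key (max m n + 1) i (by omega)
end

section
/- Suppose λ ∈ P_ε(N) is non-singular and that i < j are both admissible indexes for λ. Then i is an admissible index for λ^{(j)}. -/
open Finset

/-- If `λ ∈ 𝒫_ε(N)` is non-singular and `i < j` are admissible indexes for `λ`,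
then `i` is an admissible index for `λ^{(j)}`. -/
theorem stmt17 (ε : ℤ) (hε : ε = 1 ∨ ε = -1) (N n : ℕ) (lam : ℕ → ℕ)
    (hlam : KSPartition ε N n lam) (hns : NonSingular ε lam)
    (i j : ℕ) (hij : i < j)
    (hi : IsAdmissibleIndex ε lam i) (hj : IsAdmissibleIndex ε lam j) :
    IsAdmissibleIndex ε (ksOut lam j) i := by
  have hz : lam 0 = 0 := hlam.zero
  have anti : ∀ a b : ℕ, 1 ≤ a → a ≤ b → lam b ≤ lam a := by
    intro a b ha hab
    induction b, hab using Nat.le_induction with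
    | base => exact le_rfl
    | succ b hb ih => exact le_trans (hlam.mono b (by omega)) ih
  have hε0 : ε ≠ 0 := by rcases hε with h | h <;> simp [h]
  have cancel : ∀ x y : ℕ, ε * (-1:ℤ)^x = -1 → ε * (-1:ℤ)^y = -1 →
      ((-1:ℤ))^x = (-1)^y := fun x y hx hy => mul_left_cancel₀ hε0 (hx.trans hy.symm)
  have evenIff : ∀ x y : ℕ, ((-1:ℤ))^x = (-1)^y → (Even x ↔ Even y) := by
    intro x y h
    rw [← neg_one_pow_eq_one_iff_even (R := ℤ) (by norm_num),
      ← neg_one_pow_eq_one_iff_even (R := ℤ) (by norm_num), h]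
  have pow2 : ∀ m : ℕ, 2 ≤ m → ((-1:ℤ))^(m-2) = (-1)^m := by
    intro m hm
    obtain ⟨k, rfl⟩ := Nat.exists_eq_add_of_le hm
    rw [show 2 + k - 2 = k from by omega, pow_add]
    norm_num
  have hi1 : 1 ≤ i := by
    rcases id hi with ⟨h, _⟩ | ⟨⟨h, _⟩, _⟩ <;> exact h
  by_cases hcase : lam (j+1) + 2 ≤ lam j
  · -- Case 1 at j
    have e : ∀ k, k ≤ j → ksOut lam j k = lam k - 2 := by
      intro k hk; simp only [ksOut, if_pos hcase, if_pos hk]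
    have e' : ∀ k, j < k → ksOut lam j k = lam k := by
      intro k hk; simp only [ksOut, if_pos hcase, if_neg (by omega : ¬ k ≤ j)]
    have hmono1 : lam j ≤ lam (i+1) := anti (i+1) j (by omega) (by omega)
    rcases hi with ⟨_, hii⟩ | ⟨hstep, heq⟩
    · left
      refine ⟨hi1, ?_⟩
      rw [e i (by omega), e (i+1) (by omega)]
      omega
    · obtain ⟨_, hpos, hle, hpi, hpi1, hne0, hne2⟩ := hstep
      have hbad := hns i ⟨hi1, hpos, hle, hpi, hpi1, hne0, hne2⟩
      have hodd : ¬ Even (lam (i+1) - lam (i+2)) := fun h => hbad (Or.inr h)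
      obtain ⟨k, hk⟩ := Nat.not_even_iff_odd.mp hodd
      have h22 : lam (i+2) ≤ lam (i+1) := anti (i+1) (i+2) (by omega) (by omega)
      have h3 : 3 ≤ lam (i+1) := by
        by_cases hji : j = i+1
        · have hc2 := hcase
          rw [hji, show i+1+1 = i+2 from by omega] at hc2
          omega
        · have : lam j ≤ lam (i+2) := anti (i+2) j (by omega) (by omega)
          omega
      have hprev : lam (i-1) = 0 ∨ lam i < lam (i-1) := by
        rcases eq_or_lt_of_le hi1 with h | h
        · left; rw [show i - 1 = 0 from by omega]; exact hz
        · right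
          exact lt_of_le_of_ne (anti (i-1) i (by omega) (by omega)) (Ne.symm hne0)
      right
      refine ⟨⟨hi1, ?_, ?_, ?_, ?_, ?_, ?_⟩, ?_⟩
      · rw [e (i+1) (by omega)]; omega
      · rw [e (i+1) (by omega), e i (by omega)]; omega
      · rw [e i (by omega), pow2 (lam i) (by omega)]; exact hpi
      · rw [e (i+1) (by omega), pow2 (lam (i+1)) (by omega)]; exact hpi1
      · rw [e (i-1) (by omega), e i (by omega)]; omega
      · by_cases hji : j = i+1
        · rw [e (i+1) (by omega), e' (i+2) (by omega)]
          have hc2 := hcase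
          rw [hji, show i+1+1 = i+2 from by omega] at hc2
          omega
        · have hj2 : lam j ≤ lam (i+2) := anti (i+2) j (by omega) (by omega)
          rw [e (i+1) (by omega), e (i+2) (by omega)]
          omega
      · rw [e i (by omega), e (i+1) (by omega)]; omega
  · -- Case 2 at j
    rcases hj with ⟨_, h⟩ | ⟨hstepj, heqj⟩
    · exact absurd h hcase
    obtain ⟨hj1, hjpos, hjle, hpj, hpj1, hjne0, hjne2⟩ := hstepj
    have hbadj := hns j ⟨hj1, hjpos, hjle, hpj, hpj1, hjne0, hjne2⟩
    have e : ∀ k, k < j → ksOut lam j k = lam k - 2 := by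
      intro k hk; simp only [ksOut, if_neg hcase, if_pos hk]
    have e2 : ∀ k, ¬ k < j → k ≤ j+1 → ksOut lam j k = lam k - 1 := by
      intro k h1 h2; simp only [ksOut, if_neg hcase, if_neg h1, if_pos h2]
    have hjv : 1 ≤ lam j := by omega
    rcases hi with ⟨_, hii⟩ | ⟨hstep, heq⟩
    · left
      refine ⟨hi1, ?_⟩
      by_cases hji : i + 1 = j
      · rw [e i (by omega), e2 (i+1) (by omega) (by omega)]
        have h1j : 1 < j := by omega
        have hoj : ¬ Even (lam (j-1) - lam j) := fun h => hbadj (Or.inl ⟨h1j, h⟩)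
        obtain ⟨k, hk⟩ := Nat.not_even_iff_odd.mp hoj
        rw [show j - 1 = i from by omega, ← hji] at hk
        have hjv' : 1 ≤ lam (i+1) := by rw [hji]; exact hjv
        omega
      · have hx : lam j < lam (j-1) :=
          lt_of_le_of_ne (anti (j-1) j (by omega) (by omega)) (Ne.symm hjne0)
        have hy : lam (j-1) ≤ lam (i+1) := anti (i+1) (j-1) (by omega) (by omega)
        rw [e i (by omega), e (i+1) (by omega)]
        omega
    · obtain ⟨_, hpos, hle, hpi, hpi1, hne0, hne2⟩ := hstep
      have hbad := hns i ⟨hi1, hpos, hle, hpi, hpi1, hne0, hne2⟩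
      have hodd : ¬ Even (lam (i+1) - lam (i+2)) := fun h => hbad (Or.inr h)
      have h22 : lam (i+2) ≤ lam (i+1) := anti (i+1) (i+2) (by omega) (by omega)
      have hne_j1 : i + 1 ≠ j := by
        intro h
        exact hjne0 (by rw [show j - 1 = i from by omega, ← h]; exact heq)
      have hne_j2 : i + 2 ≠ j := by
        intro h
        apply hodd
        have hpe : ((-1:ℤ))^(lam (i+1)) = (-1)^(lam (i+2)) := by
          have hc := cancel (lam (i+1)) (lam j) hpi1 hpj
          rw [← h] at hc; exact hc
        rw [Nat.even_sub h22]
        exact evenIff _ _ hpe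
      have hij2 : i + 2 < j := by omega
      obtain ⟨k, hk⟩ := Nat.not_even_iff_odd.mp hodd
      have hx : lam j < lam (j-1) :=
        lt_of_le_of_ne (anti (j-1) j (by omega) (by omega)) (Ne.symm hjne0)
      have hy : lam (j-1) ≤ lam (i+2) := anti (i+2) (j-1) (by omega) (by omega)
      have h3 : 3 ≤ lam (i+1) := by omega
      have hprev : lam (i-1) = 0 ∨ lam i < lam (i-1) := by
        rcases eq_or_lt_of_le hi1 with h | h
        · left; rw [show i - 1 = 0 from by omega]; exact hz
        · right
          exact lt_of_le_of_ne (anti (i-1) i (by omega) (by omega)) (Ne.symm hne0)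
      right
      refine ⟨⟨hi1, ?_, ?_, ?_, ?_, ?_, ?_⟩, ?_⟩
      · rw [e (i+1) (by omega)]; omega
      · rw [e (i+1) (by omega), e i (by omega)]; omega
      · rw [e i (by omega), pow2 (lam i) (by omega)]; exact hpi
      · rw [e (i+1) (by omega), pow2 (lam (i+1)) (by omega)]; exact hpi1
      · rw [e (i-1) (by omega), e i (by omega)]; omega
      · rw [e (i+1) (by omega), e (i+2) (by omega)]; omega
      · rw [e i (by omega), e (i+1) (by omega)]; omega
end

section
/- A partition λ ∈ P_ε(N) is non-singular if and only if any two maximal admissible sequences for λ have the same length and are conjugate under the symmetric group (i.e. each is a rearrangement of the other). In other words, |Φ_λ| = 1 if and only if λ is non-singular, where Φ_λ is the set of maximal admissible sequences for λ modulo permutation of entries. -/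
open Finset

namespace KSAux

/-! ### Parity infrastructure -/

lemma npow_congr {v w : ℕ} (h : v % 2 = w % 2) : ((-1 : ℤ)) ^ v = (-1) ^ w := by
  rcases Nat.even_or_odd v with hv | hv <;> rcases Nat.even_or_odd w with hw | hw
  · rw [hv.neg_one_pow, hw.neg_one_pow]
  · rw [Nat.even_iff] at hv; rw [Nat.odd_iff] at hw; omega
  · rw [Nat.even_iff] at hw; rw [Nat.odd_iff] at hv; omega
  · rw [hv.neg_one_pow, hw.neg_one_pow]

lemma npow_flip {v w : ℕ} (h : v % 2 ≠ w % 2) : ((-1 : ℤ)) ^ w = -(-1) ^ v := by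
  rcases Nat.even_or_odd v with hv | hv <;> rcases Nat.even_or_odd w with hw | hw
  · rw [Nat.even_iff] at hv hw; omega
  · rw [hw.neg_one_pow, hv.neg_one_pow]
  · rw [hw.neg_one_pow, hv.neg_one_pow]; norm_num
  · rw [Nat.odd_iff] at hv hw; omega

lemma sgn_congr {ε : ℤ} {v w : ℕ} (h : v % 2 = w % 2) (hv : ε * (-1) ^ v = -1) :
    ε * (-1 : ℤ) ^ w = -1 := by rw [← npow_congr h]; exact hv

lemma sgn_flip {ε : ℤ} {v w : ℕ} (h : v % 2 ≠ w % 2) (hv : ε * (-1) ^ v = -1) :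
    ε * (-1 : ℤ) ^ w = 1 := by rw [npow_flip (v := v) h, mul_neg, hv]; norm_num

lemma parity_of_sgn {ε : ℤ} {v w : ℕ} (hv : ε * (-1) ^ v = -1) (hw : ε * (-1) ^ w = -1) :
    v % 2 = w % 2 := by
  by_contra h
  rw [sgn_flip h hv] at hw; norm_num at hw

/-! ### The `Good` invariant -/

structure Good (n : ℕ) (lam : ℕ → ℕ) : Prop where
  zero : lam 0 = 0
  mono : ∀ i : ℕ, 1 ≤ i → lam (i + 1) ≤ lam i
  top : ∀ i : ℕ, n < i → lam i = 0

lemma Good.mono' {n : ℕ} {lam : ℕ → ℕ} (hg : Good n lam) {p q : ℕ} (hp : 1 ≤ p) (hpq : p ≤ q) :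
    lam q ≤ lam p := by
  induction q, hpq using Nat.le_induction with
  | base => exact le_rfl
  | succ q hq ih => exact le_trans (hg.mono q (le_trans hp hq)) ih

/-! ### `ksOut` basics -/

variable {ε : ℤ} {n : ℕ} {lam : ℕ → ℕ} {i : ℕ}

lemma ksOut1 (h : lam (i + 1) + 2 ≤ lam i) (p : ℕ) :
    ksOut lam i p = if p ≤ i then lam p - 2 else lam p := by
  simp only [ksOut, if_pos h]

lemma ksOut2 (h : ¬ (lam (i + 1) + 2 ≤ lam i)) (p : ℕ) :
    ksOut lam i p = if p < i then lam p - 2 else if p ≤ i + 1 then lam p - 1 else lam p := by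
  simp only [ksOut, if_neg h]

lemma ksOut_le (p : ℕ) : ksOut lam i p ≤ lam p := by
  simp only [ksOut]; split_ifs <;> omega

lemma twoStep_not_case1 (hts : IsTwoStep ε lam i) (heq : lam i = lam (i + 1)) :
    ¬ (lam (i + 1) + 2 ≤ lam i) := by omega

lemma adm_elim (h : IsAdmissibleIndex ε lam i) :
    (1 ≤ i ∧ lam (i + 1) + 2 ≤ lam i) ∨
      (IsTwoStep ε lam i ∧ lam i = lam (i + 1) ∧ ¬ (lam (i + 1) + 2 ≤ lam i)) := by
  rcases h with h | ⟨hts, heq⟩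
  · exact Or.inl h
  · exact Or.inr ⟨hts, heq, by omega⟩

lemma adm_pos (hg : Good n lam) (h : IsAdmissibleIndex ε lam i) :
    1 ≤ i ∧ i ≤ n ∧ 1 ≤ lam i := by
  rcases adm_elim h with ⟨hi, ht⟩ | ⟨⟨hi, hp, _⟩, heq, _⟩
  · refine ⟨hi, ?_, by omega⟩
    by_contra hn
    have := hg.top i (by omega); omega
  · refine ⟨hi, ?_, by omega⟩
    by_contra hn
    have := hg.top i (by omega); omega

lemma Good.ksOut (hg : Good n lam) (h : IsAdmissibleIndex ε lam i) : Good n (ksOut lam i) := by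
  obtain ⟨hi1, hin, hipos⟩ := adm_pos hg h
  rcases adm_elim h with ⟨hi, ht⟩ | ⟨⟨_, hp2, hle, _, _, hne0, hne1⟩, heq, ht⟩
  · constructor
    · rw [ksOut1 ht 0]; simp [hg.zero]
    · intro p hp
      have h1 := hg.mono p hp
      rcases Nat.lt_trichotomy p i with hpi | rfl | hpi
      · rw [ksOut1 ht (p + 1), ksOut1 ht p]; split_ifs <;> omega
      · rw [ksOut1 ht (p + 1), ksOut1 ht p]; split_ifs <;> omega
      · rw [ksOut1 ht (p + 1), ksOut1 ht p]; split_ifs <;> omega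
    · intro p hnp
      rw [ksOut1 ht p, hg.top p hnp]; split_ifs <;> omega
  · have hi1n : i + 1 ≤ n := by
      by_contra hn
      have := hg.top (i + 1) (by omega); omega
    constructor
    · rw [ksOut2 ht 0]; rw [hg.zero]; split_ifs <;> omega
    · intro p hp
      have h1 := hg.mono p hp
      have hcase : p + 1 < i ∨ i = p + 1 ∨ i = p ∨ p = i + 1 ∨ p > i + 1 := by omega
      rcases hcase with hc | hc | hc | hc | hc
      · rw [ksOut2 ht (p + 1), ksOut2 ht p]; split_ifs <;> omega
      · subst hc
        have hne0' : lam p ≠ lam (p + 1) := by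
          have : p + 1 - 1 = p := by omega
          rw [this] at hne0; exact hne0
        rw [ksOut2 ht (p + 1), ksOut2 ht p]; split_ifs <;> omega
      · subst hc
        rw [ksOut2 ht (i + 1), ksOut2 ht i]; split_ifs <;> omega
      · subst hc
        have hb : lam (i + 1 + 1) = lam (i + 2) := congrArg lam (by omega)
        rw [ksOut2 ht (i + 1 + 1), ksOut2 ht (i + 1)]; split_ifs <;> omega
      · rw [ksOut2 ht (p + 1), ksOut2 ht p]; split_ifs <;> omega
    · intro p hnp
      rw [ksOut2 ht p, hg.top p hnp]; split_ifs <;> omega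

end KSAux

namespace KSAux

variable {ε : ℤ} {n : ℕ} {lam : ℕ → ℕ} {i : ℕ}

/-- The sum measure. -/
lemma msum_lt (hg : Good n lam) (h : IsAdmissibleIndex ε lam i) :
    ∑ p ∈ Finset.Icc 1 n, ksOut lam i p < ∑ p ∈ Finset.Icc 1 n, lam p := by
  obtain ⟨hi1, hin, hipos⟩ := adm_pos hg h
  apply Finset.sum_lt_sum (fun p _ => ksOut_le p)
  refine ⟨i, Finset.mem_Icc.mpr ⟨hi1, hin⟩, ?_⟩
  rcases adm_elim h with ⟨hi, ht⟩ | ⟨hts, heq, ht⟩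
  · rw [ksOut1 ht i, if_pos le_rfl]; omega
  · rw [ksOut2 ht i, if_neg (lt_irrefl i), if_pos (by omega)]; omega

lemma maximal_cons {l : List ℕ} :
    IsMaximalAdmissibleSeq ε lam (i :: l) ↔
      IsAdmissibleIndex ε lam i ∧ IsMaximalAdmissibleSeq ε (ksOut lam i) l := by
  constructor
  · rintro ⟨⟨ha, hs⟩, hm⟩; exact ⟨ha, hs, hm⟩
  · rintro ⟨ha, hs, hm⟩; exact ⟨⟨ha, hs⟩, hm⟩

lemma exists_maximal :
    ∀ (S : ℕ) (lam : ℕ → ℕ), Good n lam → (∑ p ∈ Finset.Icc 1 n, lam p) ≤ S →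
      ∃ l, IsMaximalAdmissibleSeq ε lam l := by
  intro S
  induction S with
  | zero =>
    intro lam hg hle
    refine ⟨[], trivial, ?_⟩
    intro i hadm
    obtain ⟨h1, h2, h3⟩ := adm_pos hg hadm
    have : lam i ≤ ∑ p ∈ Finset.Icc 1 n, lam p :=
      Finset.single_le_sum (f := lam) (fun p _ => Nat.zero_le _) (Finset.mem_Icc.mpr ⟨h1, h2⟩)
    omega
  | succ S ih =>
    intro lam hg hle
    by_cases hex : ∃ i, IsAdmissibleIndex ε lam i
    · obtain ⟨i, hi⟩ := hex
      obtain ⟨l, hl⟩ := ih (ksOut lam i) (hg.ksOut hi) (by have := msum_lt hg hi; omega)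
      exact ⟨i :: l, maximal_cons.mpr ⟨hi, hl⟩⟩
    · exact ⟨[], trivial, fun i hadm => hex ⟨i, hadm⟩⟩

/-- Nonsingularity is preserved by one KS step. -/
lemma F1 (hg : Good n lam) (hns : NonSingular ε lam) (h : IsAdmissibleIndex ε lam i) :
    NonSingular ε (ksOut lam i) := by
  intro k hts hbad
  obtain ⟨hk1, hkp, hkle, hks, hks1, hkne0, hkne1⟩ := hts
  have hm1 : lam (k + 1) ≤ lam k := hg.mono k hk1
  have hm2 : lam (k + 2) ≤ lam (k + 1) := by
    have := hg.mono (k + 1) (by omega)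
    rwa [show k + 1 + 1 = k + 2 from rfl] at this
  have z0 : lam (k - 1) = 0 ∨ (2 ≤ k ∧ lam k ≤ lam (k - 1)) := by
    rcases Nat.lt_or_ge k 2 with hk | hk
    · left; have e : k - 1 = 0 := by omega
      rw [e, hg.zero]
    · right; exact ⟨hk, hg.mono' (by omega) (by omega)⟩
  rcases adm_elim h with ⟨hi, ht⟩ | ⟨⟨hi, hip, hile, his, his1, hine0, hine1⟩, heq, ht⟩
  · -- Case 1 step at i
    have e := ksOut1 (lam := lam) (i := i) ht
    have v : ∀ p, p ≤ i → ksOut lam i p = lam p - 2 := fun p hp => by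
      rw [e p, if_pos hp]
    have w : ∀ p, i < p → ksOut lam i p = lam p := fun p hp => by
      rw [e p, if_neg (by omega)]
    have hli : 2 ≤ lam i := by omega
    have hfive : k + 2 ≤ i ∨ i = k + 1 ∨ k = i ∨ k = i + 1 ∨ i + 2 ≤ k := by omega
    rcases hfive with hc | hc | hc | hc | hc
    · -- region A : whole window shifted by 2
      have l2a : 2 ≤ lam k := le_trans hli (hg.mono' hk1 (by omega))
      have l2b : 2 ≤ lam (k + 1) := le_trans hli (hg.mono' (by omega) (by omega))
      have l2c : 2 ≤ lam (k + 2) := le_trans hli (hg.mono' (by omega) (by omega))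
      rw [v k (by omega)] at hks
      rw [v (k + 1) (by omega)] at hks1
      rw [v (k + 1) (by omega)] at hkp
      have hstep : IsTwoStep ε lam k :=
        ⟨hk1, by omega, hm1, sgn_congr (by omega) hks, sgn_congr (by omega) hks1, by
          rw [v (k - 1) (by omega), v k (by omega)] at hkne0; omega, by
          rw [v (k + 1) (by omega), v (k + 2) (by omega)] at hkne1; omega⟩
      refine hns k hstep ?_
      rcases hbad with ⟨hk2, hev⟩ | hev
      · rw [v (k - 1) (by omega), v k (by omega), Nat.even_iff] at hev
        refine Or.inl ⟨hk2, ?_⟩; rw [Nat.even_iff]; omega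
      · rw [v (k + 1) (by omega), v (k + 2) (by omega), Nat.even_iff] at hev
        refine Or.inr ?_; rw [Nat.even_iff]; omega
    · -- region B : i = k+1
      subst hc
      have l2a : 2 ≤ lam k := le_trans hli (hg.mono' hk1 (by omega))
      rw [v k (by omega)] at hks
      rw [v (k + 1) (by omega)] at hks1
      rw [show k + 1 + 1 = k + 2 from rfl] at ht
      have hstep : IsTwoStep ε lam k :=
        ⟨hk1, by omega, hm1, sgn_congr (by omega) hks, sgn_congr (by omega) hks1, by
          rw [v (k - 1) (by omega), v k (by omega)] at hkne0; omega, by omega⟩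
      refine hns k hstep ?_
      rcases hbad with ⟨hk2, hev⟩ | hev
      · rw [v (k - 1) (by omega), v k (by omega), Nat.even_iff] at hev
        refine Or.inl ⟨hk2, ?_⟩; rw [Nat.even_iff]; omega
      · rw [v (k + 1) (by omega), w (k + 2) (by omega), Nat.even_iff] at hev
        refine Or.inr ?_; rw [Nat.even_iff]; omega
    · -- region C : k = i
      subst hc
      rw [v k (by omega)] at hks
      rw [w (k + 1) (by omega)] at hks1
      rw [w (k + 1) (by omega)] at hkp
      have hstep : IsTwoStep ε lam k :=
        ⟨hk1, by omega, hm1, sgn_congr (by omega) hks, hks1, by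
          rw [v (k - 1) (by omega), v k (by omega)] at hkne0; omega, by
          rw [w (k + 1) (by omega), w (k + 2) (by omega)] at hkne1; omega⟩
      refine hns k hstep ?_
      rcases hbad with ⟨hk2, hev⟩ | hev
      · rw [v (k - 1) (by omega), v k (by omega), Nat.even_iff] at hev
        refine Or.inl ⟨hk2, ?_⟩; rw [Nat.even_iff]; omega
      · rw [w (k + 1) (by omega), w (k + 2) (by omega), Nat.even_iff] at hev
        refine Or.inr ?_; rw [Nat.even_iff]; omega
    · -- region D : k = i+1
      subst hc
      rw [w (i + 1) (by omega)] at hks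
      rw [w (i + 1 + 1) (by omega)] at hks1
      rw [w (i + 1 + 1) (by omega)] at hkp
      have hstep : IsTwoStep ε lam (i + 1) :=
        ⟨by omega, by omega, hm1, hks, hks1, by
          rw [show i + 1 - 1 = i from rfl] at hkne0 ⊢; omega, by
          rw [w (i + 1 + 1) (by omega), w (i + 1 + 2) (by omega)] at hkne1; omega⟩
      refine hns (i + 1) hstep ?_
      rcases hbad with ⟨hk2, hev⟩ | hev
      · refine Or.inl ⟨hk2, ?_⟩
        rw [show i + 1 - 1 = i from rfl] at hev ⊢
        rw [v i (by omega), w (i + 1) (by omega), Nat.even_iff] at hev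
        rw [Nat.even_iff]; omega
      · rw [w (i + 1 + 1) (by omega), w (i + 1 + 2) (by omega), Nat.even_iff] at hev
        refine Or.inr ?_; rw [Nat.even_iff]; omega
    · -- region E : i + 2 ≤ k
      rw [w k (by omega)] at hks
      rw [w (k + 1) (by omega)] at hks1
      rw [w (k + 1) (by omega)] at hkp
      have hstep : IsTwoStep ε lam k :=
        ⟨hk1, by omega, hm1, hks, hks1, by
          rw [w (k - 1) (by omega), w k (by omega)] at hkne0; omega, by
          rw [w (k + 1) (by omega), w (k + 2) (by omega)] at hkne1; omega⟩
      refine hns k hstep ?_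
      rcases hbad with ⟨hk2, hev⟩ | hev
      · rw [w (k - 1) (by omega), w k (by omega), Nat.even_iff] at hev
        refine Or.inl ⟨hk2, ?_⟩; rw [Nat.even_iff]; omega
      · rw [w (k + 1) (by omega), w (k + 2) (by omega), Nat.even_iff] at hev
        refine Or.inr ?_; rw [Nat.even_iff]; omega
  · -- Case 2 step at i
    have e := ksOut2 (lam := lam) (i := i) ht
    have v : ∀ p, p < i → ksOut lam i p = lam p - 2 := fun p hp => by
      rw [e p, if_pos hp]
    have u : ∀ p, i ≤ p → p ≤ i + 1 → ksOut lam i p = lam p - 1 := fun p hp hp' => by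
      rw [e p, if_neg (by omega), if_pos hp']
    have w : ∀ p, i + 2 ≤ p → ksOut lam i p = lam p := fun p hp => by
      rw [e p, if_neg (by omega), if_neg (by omega)]
    have hlip : 1 ≤ lam i := by omega
    have key2 : lam i + 1 ≤ lam (i - 1) ∨ i = 1 := by
      rcases Nat.lt_or_ge i 2 with hh | hh
      · exact Or.inr (by omega)
      · left
        have := hg.mono' (p := i - 1) (q := i) (by omega) (by omega)
        omega
    have hnsi := hns i ⟨hi, hip, hile, his, his1, hine0, hine1⟩
    have hnb2 : (lam (i + 1) - lam (i + 2)) % 2 = 1 := by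
      rcases Nat.even_or_odd (lam (i + 1) - lam (i + 2)) with hh | hh
      · exact absurd (Or.inr hh) hnsi
      · exact Nat.odd_iff.mp hh
    have hnb1 : i = 1 ∨ (lam (i - 1) - lam i) % 2 = 1 := by
      rcases Nat.eq_or_lt_of_le hi with hh | hh
      · exact Or.inl hh.symm
      · rcases Nat.even_or_odd (lam (i - 1) - lam i) with h2 | h2
        · exact absurd (Or.inl ⟨hh, h2⟩) hnsi
        · exact Or.inr (Nat.odd_iff.mp h2)
    have key3 : ∀ p, 1 ≤ p → p < i → 2 ≤ lam p := by
      intro p h1 h2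
      have h4 : lam (i - 1) ≤ lam p := hg.mono' h1 (by omega)
      omega
    have hseven : k + 3 ≤ i ∨ i = k + 2 ∨ i = k + 1 ∨ k = i ∨ k = i + 1 ∨ k = i + 2 ∨
        i + 3 ≤ k := by omega
    rcases hseven with hc | hc | hc | hc | hc | hc | hc
    · -- region A2 : whole window < i, shifted by 2
      have l2a : 2 ≤ lam k := key3 k hk1 (by omega)
      have l2b : 2 ≤ lam (k + 1) := key3 (k + 1) (by omega) (by omega)
      have l2c : 2 ≤ lam (k + 2) := key3 (k + 2) (by omega) (by omega)
      rw [v k (by omega)] at hks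
      rw [v (k + 1) (by omega)] at hks1
      rw [v (k + 1) (by omega)] at hkp
      have hstep : IsTwoStep ε lam k :=
        ⟨hk1, by omega, hm1, sgn_congr (by omega) hks, sgn_congr (by omega) hks1, by
          rw [v (k - 1) (by omega), v k (by omega)] at hkne0; omega, by
          rw [v (k + 1) (by omega), v (k + 2) (by omega)] at hkne1; omega⟩
      refine hns k hstep ?_
      rcases hbad with ⟨hk2, hev⟩ | hev
      · rw [v (k - 1) (by omega), v k (by omega), Nat.even_iff] at hev
        refine Or.inl ⟨hk2, ?_⟩; rw [Nat.even_iff]; omega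
      · rw [v (k + 1) (by omega), v (k + 2) (by omega), Nat.even_iff] at hev
        refine Or.inr ?_; rw [Nat.even_iff]; omega
    · -- region B2 : i = k + 2 ; parity contradiction with left-oddness at i
      subst hc
      have l2b : 2 ≤ lam (k + 1) := key3 (k + 1) (by omega) (by omega)
      rw [v (k + 1) (by omega)] at hks1
      have hsk1 : ε * (-1) ^ lam (k + 1) = -1 := sgn_congr (by omega) hks1
      have hpar := parity_of_sgn hsk1 his
      rw [show k + 2 - 1 = k + 1 from rfl] at hnb1
      omega
    · -- region C2 : i = k + 1 ; sign flip contradiction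
      subst hc
      rw [u (k + 1) (by omega) (by omega)] at hks1
      have := sgn_flip (v := lam (k + 1)) (w := lam (k + 1) - 1) (by omega) his
      rw [this] at hks1; norm_num at hks1
    · -- region D2 : k = i ; sign flip contradiction
      subst hc
      rw [u k (by omega) (by omega)] at hks
      have := sgn_flip (v := lam k) (w := lam k - 1) (by omega) his
      rw [this] at hks; norm_num at hks
    · -- region E2 : k = i + 1 ; sign flip contradiction
      subst hc
      rw [u (i + 1) (by omega) (by omega)] at hks
      have := sgn_flip (v := lam (i + 1)) (w := lam (i + 1) - 1) (by omega) his1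
      rw [this] at hks; norm_num at hks
    · -- region F2 : k = i + 2 ; parity contradiction with right-oddness at i
      subst hc
      rw [w (i + 2) (by omega)] at hks
      have hpar := parity_of_sgn his1 hks
      have := hg.mono (i + 1) (by omega)
      rw [show i + 1 + 1 = i + 2 from rfl] at this
      omega
    · -- region G2 : i + 3 ≤ k ; window untouched
      rw [w k (by omega)] at hks
      rw [w (k + 1) (by omega)] at hks1
      rw [w (k + 1) (by omega)] at hkp
      have hstep : IsTwoStep ε lam k :=
        ⟨hk1, by omega, hm1, hks, hks1, by
          rw [w (k - 1) (by omega), w k (by omega)] at hkne0; omega, by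
          rw [w (k + 1) (by omega), w (k + 2) (by omega)] at hkne1; omega⟩
      refine hns k hstep ?_
      rcases hbad with ⟨hk2, hev⟩ | hev
      · rw [w (k - 1) (by omega), w k (by omega), Nat.even_iff] at hev
        refine Or.inl ⟨hk2, ?_⟩; rw [Nat.even_iff]; omega
      · rw [w (k + 1) (by omega), w (k + 2) (by omega), Nat.even_iff] at hev
        refine Or.inr ?_; rw [Nat.even_iff]; omega

end KSAux

namespace KSAux

variable {ε : ℤ} {n : ℕ} {lam : ℕ → ℕ} {i j : ℕ}

lemma ns_facts (hns : NonSingular ε lam) (hts : IsTwoStep ε lam i) :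
    (lam (i + 1) - lam (i + 2)) % 2 = 1 ∧ (i = 1 ∨ (lam (i - 1) - lam i) % 2 = 1) := by
  obtain ⟨hi, hip, hile, his, his1, hine0, hine1⟩ := hts
  have hnsi := hns i ⟨hi, hip, hile, his, his1, hine0, hine1⟩
  constructor
  · rcases Nat.even_or_odd (lam (i + 1) - lam (i + 2)) with hh | hh
    · exact absurd (Or.inr hh) hnsi
    · exact Nat.odd_iff.mp hh
  · rcases Nat.eq_or_lt_of_le hi with hh | hh
    · exact Or.inl hh.symm
    · rcases Nat.even_or_odd (lam (i - 1) - lam i) with h2 | h2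
      · exact absurd (Or.inl ⟨hh, h2⟩) hnsi
      · exact Or.inr (Nat.odd_iff.mp h2)

lemma zfact (hg : Good n lam) (hi : 1 ≤ i) :
    (i = 1 ∧ lam (i - 1) = 0) ∨ (2 ≤ i ∧ lam i ≤ lam (i - 1)) := by
  rcases Nat.lt_or_ge i 2 with hk | hk
  · left
    refine ⟨by omega, ?_⟩
    have e : i - 1 = 0 := by omega
    rw [e, hg.zero]
  · right; exact ⟨hk, hg.mono' (by omega) (by omega)⟩

lemma mono2 (hg : Good n lam) (hi : 1 ≤ i) : lam (i + 2) ≤ lam (i + 1) := by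
  have := hg.mono (i + 1) (by omega)
  rwa [show i + 1 + 1 = i + 2 from rfl] at this

/-- Commutation of distinct admissible indices on a nonsingular partition. -/
lemma F2 (hg : Good n lam) (hns : NonSingular ε lam) (hij : i < j)
    (hai : IsAdmissibleIndex ε lam i) (haj : IsAdmissibleIndex ε lam j) :
    IsAdmissibleIndex ε (ksOut lam i) j ∧ IsAdmissibleIndex ε (ksOut lam j) i ∧
      ksOut (ksOut lam i) j = ksOut (ksOut lam j) i := by
  rcases adm_elim hai with ⟨hi1, ti⟩ | ⟨tsi, eqi, ti⟩ <;>
    rcases adm_elim haj with ⟨hj1, tj⟩ | ⟨tsj, eqj, tj⟩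
  · -- Combo 11 : both Case 1
    have ei := ksOut1 (lam := lam) (i := i) ti
    have ej := ksOut1 (lam := lam) (i := j) tj
    have hm : lam j ≤ lam (i + 1) := hg.mono' (by omega) (by omega)
    have tIJ : ksOut lam i (j + 1) + 2 ≤ ksOut lam i j := by
      rw [ei (j + 1), ei j, if_neg (by omega), if_neg (by omega)]; exact tj
    have tJI : ksOut lam j (i + 1) + 2 ≤ ksOut lam j i := by
      rw [ej (i + 1), ej i, if_pos (by omega), if_pos (by omega)]; omega
    refine ⟨Or.inl ⟨by omega, tIJ⟩, Or.inl ⟨by omega, tJI⟩, ?_⟩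
    funext p
    rw [ksOut1 tIJ p, ksOut1 tJI p]
    simp only [ei, ej]
    split_ifs <;> omega
  · -- Combo 12 : i Case 1, j Case 2
    obtain ⟨hj1, hjp, hjle, hjs, hjs1, hjne0, hjne1⟩ := tsj
    obtain ⟨rj, lj⟩ := ns_facts hns ⟨hj1, hjp, hjle, hjs, hjs1, hjne0, hjne1⟩
    have ei := ksOut1 (lam := lam) (i := i) ti
    have ej := ksOut2 (lam := lam) (i := j) tj
    rcases Nat.eq_or_lt_of_le (show i + 1 ≤ j by omega) with hd | hd
    · -- j = i + 1
      subst hd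
      rw [show i + 1 - 1 = i from rfl] at hjne0 lj
      have hodd : (lam i - lam (i + 1)) % 2 = 1 := by rcases lj with h | h; omega; exact h
      have h3 : lam (i + 1) + 3 ≤ lam i := by omega
      have hple : 1 ≤ lam (i + 1 + 1) := by omega
      have tIJ : ¬ (ksOut lam i (i + 1 + 1) + 2 ≤ ksOut lam i (i + 1)) := by
        rw [ei (i + 1 + 1), ei (i + 1), if_neg (by omega), if_neg (by omega)]; omega
      have tJI : ksOut lam (i + 1) (i + 1) + 2 ≤ ksOut lam (i + 1) i := by
        rw [ej (i + 1), ej i, if_neg (by omega), if_pos (by omega), if_pos (by omega)]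
        omega
      refine ⟨Or.inr ⟨⟨by omega, ?_, ?_, ?_, ?_, ?_, ?_⟩, ?_⟩, Or.inl ⟨by omega, tJI⟩, ?_⟩
      · rw [ei (i + 1 + 1), if_neg (by omega)]; exact hjp
      · rw [ei (i + 1 + 1), ei (i + 1), if_neg (by omega), if_neg (by omega)]; exact hjle
      · rw [ei (i + 1), if_neg (by omega)]; exact hjs
      · rw [ei (i + 1 + 1), if_neg (by omega)]; exact hjs1
      · rw [show i + 1 - 1 = i from rfl, ei i, ei (i + 1), if_pos (by omega),
          if_neg (by omega)]
        omega
      · rw [ei (i + 1 + 1), ei (i + 1 + 2), if_neg (by omega), if_neg (by omega)]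
        exact hjne1
      · rw [ei (i + 1 + 1), ei (i + 1), if_neg (by omega), if_neg (by omega)]; exact eqj
      · funext p
        rw [ksOut2 tIJ p, ksOut1 tJI p]
        simp only [ei, ej]
        split_ifs <;> omega
    · -- i + 2 ≤ j
      have hkey : lam j + 1 ≤ lam (j - 1) := by
        rcases zfact (i := j) hg (by omega) with h | h
        · omega
        · omega
      have hple : 2 ≤ lam (i + 1) := by
        have := hg.mono' (p := i + 1) (q := j - 1) (by omega) (by omega)
        omega
      have tIJ : ¬ (ksOut lam i (j + 1) + 2 ≤ ksOut lam i j) := by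
        rw [ei (j + 1), ei j, if_neg (by omega), if_neg (by omega)]; omega
      have tJI : ksOut lam j (i + 1) + 2 ≤ ksOut lam j i := by
        rw [ej (i + 1), ej i, if_pos (by omega), if_pos (by omega)]; omega
      refine ⟨Or.inr ⟨⟨by omega, ?_, ?_, ?_, ?_, ?_, ?_⟩, ?_⟩, Or.inl ⟨by omega, tJI⟩, ?_⟩
      · rw [ei (j + 1), if_neg (by omega)]; exact hjp
      · rw [ei (j + 1), ei j, if_neg (by omega), if_neg (by omega)]; exact hjle
      · rw [ei j, if_neg (by omega)]; exact hjs
      · rw [ei (j + 1), if_neg (by omega)]; exact hjs1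
      · rw [ei (j - 1), ei j, if_neg (by omega), if_neg (by omega)]; exact hjne0
      · rw [ei (j + 1), ei (j + 2), if_neg (by omega), if_neg (by omega)]; exact hjne1
      · rw [ei (j + 1), ei j, if_neg (by omega), if_neg (by omega)]; exact eqj
      · funext p
        rw [ksOut2 tIJ p, ksOut1 tJI p]
        simp only [ei, ej]
        split_ifs <;> omega
  · -- Combo 21 : i Case 2, j Case 1
    obtain ⟨hi1, hip, hile, his, his1, hine0, hine1⟩ := tsi
    obtain ⟨ri, li⟩ := ns_facts hns ⟨hi1, hip, hile, his, his1, hine0, hine1⟩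
    have ei := ksOut2 (lam := lam) (i := i) ti
    have ej := ksOut1 (lam := lam) (i := j) tj
    have zi := zfact hg hi1
    rcases Nat.eq_or_lt_of_le (show i + 1 ≤ j by omega) with hd | hd
    · -- j = i + 1
      subst hd
      rw [show i + 1 + 1 = i + 2 from rfl] at tj
      have h3 : lam (i + 2) + 3 ≤ lam (i + 1) := by omega
      have tIJ : ksOut lam i (i + 2) + 2 ≤ ksOut lam i (i + 1) := by
        rw [ei (i + 2), ei (i + 1), if_neg (by omega), if_neg (by omega),
          if_neg (by omega), if_pos (by omega)]
        omega
      have tJI : ¬ (ksOut lam (i + 1) (i + 1) + 2 ≤ ksOut lam (i + 1) i) := by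
        rw [ej (i + 1), ej i, if_pos (by omega), if_pos (by omega)]; omega
      refine ⟨Or.inl ⟨by omega, tIJ⟩,
        Or.inr ⟨⟨hi1, ?_, ?_, ?_, ?_, ?_, ?_⟩, ?_⟩, ?_⟩
      · rw [ej (i + 1), if_pos (by omega)]; omega
      · rw [ej (i + 1), ej i, if_pos (by omega), if_pos (by omega)]; omega
      · rw [ej i, if_pos (by omega)]; exact sgn_congr (by omega) his
      · rw [ej (i + 1), if_pos (by omega)]; exact sgn_congr (by omega) his1
      · rw [ej (i - 1), ej i, if_pos (by omega), if_pos (by omega)]; omega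
      · rw [ej (i + 1), ej (i + 2), if_pos (by omega), if_neg (by omega)]; omega
      · rw [ej (i + 1), ej i, if_pos (by omega), if_pos (by omega)]; omega
      · funext p
        rw [ksOut1 tIJ p, ksOut2 tJI p]
        simp only [ei, ej]
        split_ifs <;> omega
    · -- i + 2 ≤ j
      have hple : 2 ≤ lam (i + 2) := by
        have := hg.mono' (p := i + 2) (q := j) (by omega) (by omega)
        omega
      have h1le : lam (i + 2) + 1 ≤ lam (i + 1) := by omega
      have tIJ : ksOut lam i (j + 1) + 2 ≤ ksOut lam i j := by
        rw [ei (j + 1), ei j, if_neg (by omega), if_neg (by omega), if_neg (by omega),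
          if_neg (by omega)]
        exact tj
      have tJI : ¬ (ksOut lam j (i + 1) + 2 ≤ ksOut lam j i) := by
        rw [ej (i + 1), ej i, if_pos (by omega), if_pos (by omega)]; omega
      refine ⟨Or.inl ⟨by omega, tIJ⟩,
        Or.inr ⟨⟨hi1, ?_, ?_, ?_, ?_, ?_, ?_⟩, ?_⟩, ?_⟩
      · rw [ej (i + 1), if_pos (by omega)]; omega
      · rw [ej (i + 1), ej i, if_pos (by omega), if_pos (by omega)]; omega
      · rw [ej i, if_pos (by omega)]; exact sgn_congr (by omega) his
      · rw [ej (i + 1), if_pos (by omega)]; exact sgn_congr (by omega) his1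
      · rw [ej (i - 1), ej i, if_pos (by omega), if_pos (by omega)]; omega
      · rw [ej (i + 1), ej (i + 2), if_pos (by omega), if_pos (by omega)]; omega
      · rw [ej (i + 1), ej i, if_pos (by omega), if_pos (by omega)]; omega
      · funext p
        rw [ksOut1 tIJ p, ksOut2 tJI p]
        simp only [ei, ej]
        split_ifs <;> omega
  · -- Combo 22 : both Case 2
    obtain ⟨hi1, hip, hile, his, his1, hine0, hine1⟩ := tsi
    obtain ⟨hj1, hjp, hjle, hjs, hjs1, hjne0, hjne1⟩ := tsj
    obtain ⟨ri, li⟩ := ns_facts hns ⟨hi1, hip, hile, his, his1, hine0, hine1⟩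
    have ei := ksOut2 (lam := lam) (i := i) ti
    have ej := ksOut2 (lam := lam) (i := j) tj
    have zi := zfact hg hi1
    -- first, j cannot be i+1 or i+2
    have hd : i + 3 ≤ j := by
      by_contra hd
      rcases (show j = i + 1 ∨ j = i + 2 by omega) with hh | hh
      · subst hh
        have := parity_of_sgn his1 hjs1
        rw [show i + 1 + 1 = i + 2 from rfl] at this
        have := mono2 hg hi1
        omega
      · subst hh
        have := parity_of_sgn his1 hjs
        have := mono2 hg hi1
        omega
    have hple : 2 ≤ lam (i + 2) := by
      have h4 : lam (j - 1) ≤ lam (i + 2) := hg.mono' (by omega) (by omega)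
      have h5 : lam j ≤ lam (j - 1) := hg.mono' (by omega) (by omega)
      omega
    have h1le : lam (i + 2) + 1 ≤ lam (i + 1) := by omega
    have tIJ : ¬ (ksOut lam i (j + 1) + 2 ≤ ksOut lam i j) := by
      rw [ei (j + 1), ei j, if_neg (by omega), if_neg (by omega), if_neg (by omega),
        if_neg (by omega)]
      omega
    have tJI : ¬ (ksOut lam j (i + 1) + 2 ≤ ksOut lam j i) := by
      rw [ej (i + 1), ej i, if_pos (by omega), if_pos (by omega)]; omega
    refine ⟨Or.inr ⟨⟨hj1, ?_, ?_, ?_, ?_, ?_, ?_⟩, ?_⟩,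
      Or.inr ⟨⟨hi1, ?_, ?_, ?_, ?_, ?_, ?_⟩, ?_⟩, ?_⟩
    · rw [ei (j + 1), if_neg (by omega), if_neg (by omega)]; exact hjp
    · rw [ei (j + 1), ei j, if_neg (by omega), if_neg (by omega), if_neg (by omega),
        if_neg (by omega)]
      exact hjle
    · rw [ei j, if_neg (by omega), if_neg (by omega)]; exact hjs
    · rw [ei (j + 1), if_neg (by omega), if_neg (by omega)]; exact hjs1
    · rw [ei (j - 1), ei j, if_neg (by omega), if_neg (by omega), if_neg (by omega),
        if_neg (by omega)]
      exact hjne0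
    · rw [ei (j + 1), ei (j + 2), if_neg (by omega), if_neg (by omega), if_neg (by omega),
        if_neg (by omega)]
      exact hjne1
    · rw [ei (j + 1), ei j, if_neg (by omega), if_neg (by omega), if_neg (by omega),
        if_neg (by omega)]
      exact eqj
    · rw [ej (i + 1), if_pos (by omega)]; omega
    · rw [ej (i + 1), ej i, if_pos (by omega), if_pos (by omega)]; omega
    · rw [ej i, if_pos (by omega)]; exact sgn_congr (by omega) his
    · rw [ej (i + 1), if_pos (by omega)]; exact sgn_congr (by omega) his1
    · rw [ej (i - 1), ej i, if_pos (by omega), if_pos (by omega)]; omega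
    · rw [ej (i + 1), ej (i + 2), if_pos (by omega), if_pos (by omega)]; omega
    · rw [ej (i + 1), ej i, if_pos (by omega), if_pos (by omega)]; omega
    · funext p
      rw [ksOut2 tIJ p, ksOut2 tJI p]
      simp only [ei, ej]
      split_ifs <;> omega

end KSAux

namespace KSAux

variable {ε : ℤ} {n : ℕ} {lam : ℕ → ℕ} {i j : ℕ}

lemma forward :
    ∀ (S : ℕ) (lam : ℕ → ℕ), Good n lam → (∑ p ∈ Finset.Icc 1 n, lam p) ≤ S →
      NonSingular ε lam → ∀ l₁ l₂ : List ℕ, IsMaximalAdmissibleSeq ε lam l₁ →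
        IsMaximalAdmissibleSeq ε lam l₂ → l₁.Perm l₂ := by
  intro S
  induction S with
  | zero =>
    intro lam hg hle hns l₁ l₂ h₁ h₂
    have hnoadm : ∀ k, ¬ IsAdmissibleIndex ε lam k := by
      intro k hk
      obtain ⟨a, b, c⟩ := adm_pos hg hk
      have : lam k ≤ ∑ p ∈ Finset.Icc 1 n, lam p :=
        Finset.single_le_sum (f := lam) (fun p _ => Nat.zero_le _)
          (Finset.mem_Icc.mpr ⟨a, b⟩)
      omega
    cases l₁ with
    | nil =>
      cases l₂ with
      | nil => exact List.Perm.refl _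
      | cons j t => exact absurd (maximal_cons.mp h₂).1 (hnoadm j)
    | cons i t => exact absurd (maximal_cons.mp h₁).1 (hnoadm i)
  | succ S ih =>
    intro lam hg hle hns l₁ l₂ h₁ h₂
    cases l₁ with
    | nil =>
      cases l₂ with
      | nil => exact List.Perm.refl _
      | cons j t₂ => exact absurd (maximal_cons.mp h₂).1 (h₁.2 j)
    | cons i t₁ =>
      cases l₂ with
      | nil => exact absurd (maximal_cons.mp h₁).1 (h₂.2 i)
      | cons j t₂ =>
        obtain ⟨hai, hm₁⟩ := maximal_cons.mp h₁
        obtain ⟨haj, hm₂⟩ := maximal_cons.mp h₂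
        have hgood_i := hg.ksOut hai
        have hns_i := F1 hg hns hai
        have hb_i : (∑ p ∈ Finset.Icc 1 n, ksOut lam i p) ≤ S := by
          have := msum_lt hg hai; omega
        by_cases hijeq : i = j
        · subst hijeq
          exact (ih (ksOut lam i) hgood_i hb_i hns_i t₁ t₂ hm₁ hm₂).cons i
        · obtain ⟨hadmIJ, hadmJI, heqf⟩ :
            IsAdmissibleIndex ε (ksOut lam i) j ∧ IsAdmissibleIndex ε (ksOut lam j) i ∧
              ksOut (ksOut lam i) j = ksOut (ksOut lam j) i := by
            rcases Nat.lt_or_ge i j with hlt | hge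
            · exact F2 hg hns hlt hai haj
            · have h := F2 hg hns (show j < i by omega) haj hai
              exact ⟨h.2.1, h.1, h.2.2.symm⟩
          have hgood_j := hg.ksOut haj
          have hns_j := F1 hg hns haj
          have hb_j : (∑ p ∈ Finset.Icc 1 n, ksOut lam j p) ≤ S := by
            have := msum_lt hg haj; omega
          obtain ⟨c, hc⟩ := exists_maximal (ε := ε) S (ksOut (ksOut lam i) j)
            (hgood_i.ksOut hadmIJ) (by have := msum_lt hgood_i hadmIJ; omega)
          have hmax1 : IsMaximalAdmissibleSeq ε (ksOut lam i) (j :: c) :=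
            maximal_cons.mpr ⟨hadmIJ, hc⟩
          have hp1 : t₁.Perm (j :: c) := ih (ksOut lam i) hgood_i hb_i hns_i t₁ (j :: c) hm₁ hmax1
          have hc' : IsMaximalAdmissibleSeq ε (ksOut (ksOut lam j) i) c := heqf ▸ hc
          have hmax2 : IsMaximalAdmissibleSeq ε (ksOut lam j) (i :: c) :=
            maximal_cons.mpr ⟨hadmJI, hc'⟩
          have hp2 : t₂.Perm (i :: c) := ih (ksOut lam j) hgood_j hb_j hns_j t₂ (i :: c) hm₂ hmax2
          exact (hp1.cons i).trans ((List.Perm.swap j i c).trans (hp2.cons j).symm)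

end KSAux

namespace KSAux

variable {ε : ℤ} {n : ℕ} {lam f : ℕ → ℕ} {i j k : ℕ}

lemma sgn_congr' {v w : ℕ} (h : v % 2 = w % 2) (hv : ε * (-1) ^ v = 1) :
    ε * (-1 : ℤ) ^ w = 1 := by rw [← npow_congr h]; exact hv

lemma sgn_clash {v : ℕ} (h1 : ε * (-1) ^ v = 1) (h2 : ε * (-1) ^ v = -1) : False := by
  rw [h1] at h2; norm_num at h2

/-- One step of the crux-R blocking invariant. -/
lemma avoidR_step (hg : Good n f) (hi : 1 ≤ i)
    (h1 : ε * (-1) ^ f i = 1) (h2 : ε * (-1) ^ f (i + 1) = 1)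
    (h3 : f (i + 1) ≤ f (i + 2) + 1) (hk : IsAdmissibleIndex ε f k) :
    k ≠ i + 1 ∧ ε * (-1) ^ ksOut f k i = 1 ∧ ε * (-1) ^ ksOut f k (i + 1) = 1 ∧
      ksOut f k (i + 1) ≤ ksOut f k (i + 2) + 1 := by
  rcases adm_elim hk with ⟨hk1, t⟩ | ⟨⟨hk1, hkp, hkle, hs, hs1, hne0, hne1⟩, heq, t⟩
  · have e := ksOut1 (lam := f) (i := k) t
    have hki : k ≠ i + 1 := by
      rintro rfl
      rw [show i + 1 + 1 = i + 2 from rfl] at t; omega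
    refine ⟨hki, ?_, ?_, ?_⟩
    · rw [e i]; split_ifs with hh
      · have := hg.mono' hi hh
        exact sgn_congr' (by omega) h1
      · exact h1
    · rw [e (i + 1)]; split_ifs with hh
      · have := hg.mono' (show 1 ≤ i + 1 by omega) hh
        exact sgn_congr' (by omega) h2
      · exact h2
    · rw [e (i + 1), e (i + 2)]; split_ifs <;> omega
  · have e := ksOut2 (lam := f) (i := k) t
    have hki : k ≠ i + 1 := by rintro rfl; exact sgn_clash h2 hs
    have hki' : k ≠ i := by rintro rfl; exact sgn_clash h1 hs
    refine ⟨hki, ?_, ?_, ?_⟩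
    · rw [e i]; split_ifs with ha hb
      · have hc : f (k - 1) ≤ f i := hg.mono' hi (by omega)
        have hd : f k ≤ f (k - 1) := hg.mono' (by omega) (by omega)
        exact sgn_congr' (by omega) h1
      · have : i = k ∨ i = k + 1 := by omega
        rcases this with rfl | hh
        · exact absurd hs (by rw [h1]; norm_num)
        · rw [← hh] at hs1
          exact absurd hs1 (by rw [h1]; norm_num)
      · exact h1
    · rw [e (i + 1)]; split_ifs with ha hb
      · have hc : f (k - 1) ≤ f (i + 1) := hg.mono' (by omega) (by omega)
        have hd : f k ≤ f (k - 1) := hg.mono' (by omega) (by omega)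
        exact sgn_congr' (by omega) h2
      · exact (show False by omega).elim
      · exact h2
    · rw [e (i + 1), e (i + 2)]; split_ifs <;> omega

lemma avoidR_seq (hi : 1 ≤ i) :
    ∀ (l : List ℕ) (f : ℕ → ℕ), Good n f →
      ε * (-1) ^ f i = 1 → ε * (-1) ^ f (i + 1) = 1 → f (i + 1) ≤ f (i + 2) + 1 →
      IsAdmissibleSeq ε f l → (i + 1) ∉ l := by
  intro l
  induction l with
  | nil => intro f _ _ _ _ _; exact List.not_mem_nil
  | cons k t ihl =>
    intro f hg h1 h2 h3 hseq
    obtain ⟨hk, hrest⟩ := hseq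
    obtain ⟨hne, hq1, hq2, hq3⟩ := avoidR_step hg hi h1 h2 h3 hk
    intro hmem
    rcases List.mem_cons.mp hmem with hh | hh
    · exact hne hh.symm
    · exact ihl (ksOut f k) (hg.ksOut hk) hq1 hq2 hq3 hrest hh

/-- One step of the crux-L blocking invariant. -/
lemma avoidL_step (hg : Good n f) (hi : 2 ≤ i)
    (h1 : f (i - 1) = f i) (h2 : f i = f (i + 1)) (hk : IsAdmissibleIndex ε f k) :
    k ≠ i ∧ ksOut f k (i - 1) = ksOut f k i ∧ ksOut f k i = ksOut f k (i + 1) := by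
  have hb1 : f (i - 1 + 1) = f i := congrArg f (by omega)
  have hb2 : f (i - 1 + 2) = f (i + 1) := congrArg f (by omega)
  have hb3 : f (i - 2 + 1) = f (i - 1) := congrArg f (by omega)
  have hb4 : f (i - 2 + 2) = f i := congrArg f (by omega)
  rcases adm_elim hk with ⟨hk1, t⟩ | ⟨⟨hk1, hkp, hkle, hs, hs1, hne0, hne1⟩, heq, t⟩
  · have e := ksOut1 (lam := f) (i := k) t
    have hki : k ≠ i := by rintro rfl; omega
    have hki' : k ≠ i - 1 := by rintro rfl; omega
    refine ⟨hki, ?_, ?_⟩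
    · rw [e (i - 1), e i]; split_ifs <;> omega
    · rw [e i, e (i + 1)]; split_ifs <;> omega
  · have e := ksOut2 (lam := f) (i := k) t
    have hki : k ≠ i := by rintro rfl; exact hne0 h1
    have hki1 : k ≠ i - 1 := by rintro rfl; rw [hb1, hb2] at hne1; exact hne1 h2
    have hki2 : k ≠ i - 2 ∨ i = 2 := by
      rcases Nat.eq_or_lt_of_le hi with hh | hh
      · exact Or.inr hh.symm
      · left; rintro rfl; rw [hb3, hb4] at hne1; exact hne1 h1
    have hki3 : k ≠ i + 1 := by
      rintro rfl
      rw [show i + 1 - 1 = i from rfl] at hne0; exact hne0 h2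
    have hkz : k ≠ i - 2 := by
      rcases hki2 with hh | hh
      · exact hh
      · subst hh; intro hh2; subst hh2; omega
    refine ⟨hki, ?_, ?_⟩
    · rw [e (i - 1), e i]; split_ifs <;> omega
    · rw [e i, e (i + 1)]; split_ifs <;> omega

lemma avoidL_seq (hi : 2 ≤ i) :
    ∀ (l : List ℕ) (f : ℕ → ℕ), Good n f →
      f (i - 1) = f i → f i = f (i + 1) → IsAdmissibleSeq ε f l → i ∉ l := by
  intro l
  induction l with
  | nil => intro f _ _ _ _; exact List.not_mem_nil
  | cons k t ihl =>
    intro f hg h1 h2 hseq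
    obtain ⟨hk, hrest⟩ := hseq
    obtain ⟨hne, hq1, hq2⟩ := avoidL_step hg hi h1 h2 hk
    intro hmem
    rcases List.mem_cons.mp hmem with hh | hh
    · exact hne hh.symm
    · exact ihl (ksOut f k) (hg.ksOut hk) hq1 hq2 hrest hh

end KSAux

namespace KSAux

variable {ε : ℤ} {n : ℕ} {lam : ℕ → ℕ} {i j k : ℕ}

lemma backward :
    ∀ (S : ℕ) (lam : ℕ → ℕ), Good n lam → (∑ p ∈ Finset.Icc 1 n, lam p) ≤ S →
      ∀ i, IsTwoStep ε lam i → IsBadStep lam i →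
        ∃ l₁ l₂ : List ℕ, IsMaximalAdmissibleSeq ε lam l₁ ∧
          IsMaximalAdmissibleSeq ε lam l₂ ∧ ¬ l₁.Perm l₂ := by
  intro S
  induction S with
  | zero =>
    intro lam hg hle i hts hbad
    obtain ⟨hi1, hip, hile, _, _, _, _⟩ := hts
    have hin : i ≤ n := by
      by_contra hh
      have := hg.top i (by omega); omega
    have : lam i ≤ ∑ p ∈ Finset.Icc 1 n, lam p :=
      Finset.single_le_sum (f := lam) (fun p _ => Nat.zero_le _)
        (Finset.mem_Icc.mpr ⟨hi1, hin⟩)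
    omega
  | succ S ih =>
    intro lam hg hle i hts hbad
    obtain ⟨hi1, hip, hile, his, his1, hne0, hne1⟩ := hts
    have hpar : lam i % 2 = lam (i + 1) % 2 := parity_of_sgn his his1
    have zi := zfact hg hi1
    have hm2 : lam (i + 2) ≤ lam (i + 1) := mono2 hg hi1
    by_cases hc1 : lam (i + 1) + 2 ≤ lam i
    · -- reduction R1 : Case 1 at i keeps the bad step at i
      have hadm : IsAdmissibleIndex ε lam i := Or.inl ⟨hi1, hc1⟩
      have e := ksOut1 (lam := lam) (i := i) hc1
      have hts' : IsTwoStep ε (ksOut lam i) i := by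
        refine ⟨hi1, ?_, ?_, ?_, ?_, ?_, ?_⟩
        · rw [e (i + 1), if_neg (by omega)]; exact hip
        · rw [e (i + 1), e i, if_neg (by omega), if_pos le_rfl]; omega
        · rw [e i, if_pos le_rfl]; exact sgn_congr (by omega) his
        · rw [e (i + 1), if_neg (by omega)]; exact his1
        · rw [e (i - 1), e i, if_pos (by omega), if_pos le_rfl]; omega
        · rw [e (i + 1), e (i + 2), if_neg (by omega), if_neg (by omega)]; exact hne1
      have hbad' : IsBadStep (ksOut lam i) i := by
        rcases hbad with ⟨hi2, hev⟩ | hev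
        · refine Or.inl ⟨hi2, ?_⟩
          rw [e (i - 1), e i, if_pos (by omega), if_pos le_rfl]
          rw [Nat.even_iff] at hev ⊢; omega
        · refine Or.inr ?_
          rw [e (i + 1), e (i + 2), if_neg (by omega), if_neg (by omega)]; exact hev
      obtain ⟨l₁, l₂, h1, h2, h3⟩ := ih (ksOut lam i) (hg.ksOut hadm)
        (by have := msum_lt hg hadm; omega) i hts' hbad'
      exact ⟨i :: l₁, i :: l₂, maximal_cons.mpr ⟨hadm, h1⟩, maximal_cons.mpr ⟨hadm, h2⟩,
        fun hp => h3 hp.cons_inv⟩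
    · have heqi : lam i = lam (i + 1) := by omega
      have hadm_i : IsAdmissibleIndex ε lam i :=
        Or.inr ⟨⟨hi1, hip, hile, his, his1, hne0, hne1⟩, heqi⟩
      by_cases hc2 : (lam (i + 1) - lam (i + 2)) % 2 = 0
      · -- right-bad with even gap ≥ 2
        have hg2 : lam (i + 2) + 2 ≤ lam (i + 1) := by omega
        have hg2' : lam (i + 1 + 1) + 2 ≤ lam (i + 1) := hg2
        have hadm_j : IsAdmissibleIndex ε lam (i + 1) := Or.inl ⟨by omega, hg2'⟩
        by_cases hc3 : lam (i + 2) + 4 ≤ lam (i + 1)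
        · -- reduction R2a : Case 1 at i+1 keeps the bad step at i
          have e := ksOut1 (lam := lam) (i := i + 1) hg2'
          have hts' : IsTwoStep ε (ksOut lam (i + 1)) i := by
            refine ⟨hi1, ?_, ?_, ?_, ?_, ?_, ?_⟩
            · rw [e (i + 1), if_pos le_rfl]; omega
            · rw [e (i + 1), e i, if_pos le_rfl, if_pos (by omega)]; omega
            · rw [e i, if_pos (by omega)]; exact sgn_congr (by omega) his
            · rw [e (i + 1), if_pos le_rfl]; exact sgn_congr (by omega) his1
            · rw [e (i - 1), e i, if_pos (by omega), if_pos (by omega)]; omega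
            · rw [e (i + 1), e (i + 2), if_pos le_rfl, if_neg (by omega)]; omega
          have hbad' : IsBadStep (ksOut lam (i + 1)) i := by
            refine Or.inr ?_
            rw [e (i + 1), e (i + 2), if_pos le_rfl, if_neg (by omega)]
            rw [Nat.even_iff]; omega
          obtain ⟨l₁, l₂, h1, h2, h3⟩ := ih (ksOut lam (i + 1)) (hg.ksOut hadm_j)
            (by have := msum_lt hg hadm_j; omega) i hts' hbad'
          exact ⟨(i + 1) :: l₁, (i + 1) :: l₂, maximal_cons.mpr ⟨hadm_j, h1⟩,
            maximal_cons.mpr ⟨hadm_j, h2⟩, fun hp => h3 hp.cons_inv⟩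
        · -- crux R : gap exactly 2
          have hgap : lam (i + 1) = lam (i + 2) + 2 := by omega
          have hgμ := hg.ksOut hadm_i
          have hgν := hg.ksOut hadm_j
          obtain ⟨A, hA⟩ := exists_maximal (ε := ε) S (ksOut lam i) hgμ
            (by have := msum_lt hg hadm_i; omega)
          obtain ⟨B, hB⟩ := exists_maximal (ε := ε) S (ksOut lam (i + 1)) hgν
            (by have := msum_lt hg hadm_j; omega)
          refine ⟨i :: A, (i + 1) :: B, maximal_cons.mpr ⟨hadm_i, hA⟩,
            maximal_cons.mpr ⟨hadm_j, hB⟩, ?_⟩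
          intro hp
          have eμ := ksOut2 (lam := lam) (i := i) hc1
          have hq1 : ε * (-1) ^ ksOut lam i i = 1 := by
            rw [eμ i, if_neg (by omega), if_pos (by omega)]
            exact sgn_flip (by omega) his
          have hq2 : ε * (-1) ^ ksOut lam i (i + 1) = 1 := by
            rw [eμ (i + 1), if_neg (by omega), if_pos le_rfl]
            exact sgn_flip (by omega) his1
          have hq3 : ksOut lam i (i + 1) ≤ ksOut lam i (i + 2) + 1 := by
            rw [eμ (i + 1), eμ (i + 2), if_neg (by omega), if_pos le_rfl,
              if_neg (by omega), if_neg (by omega)]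
            omega
          have hnotin : (i + 1) ∉ A :=
            avoidR_seq (by omega) A (ksOut lam i) hgμ hq1 hq2 hq3 hA.1
          have hmem : (i + 1) ∈ i :: A := hp.mem_iff.mpr List.mem_cons_self
          rcases List.mem_cons.mp hmem with hh | hh
          · omega
          · exact hnotin hh
      · -- left-bad
        have hld : 1 < i ∧ (lam (i - 1) - lam i) % 2 = 0 := by
          rcases hbad with ⟨hi2, hev⟩ | hev
          · exact ⟨hi2, Nat.even_iff.mp hev⟩
          · exact absurd (Nat.even_iff.mp hev) hc2
        have hm0 : lam i ≤ lam (i - 1) := hg.mono' (by omega) (by omega)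
        have hh2 : lam i + 2 ≤ lam (i - 1) := by omega
        have t : lam (i - 1 + 1) + 2 ≤ lam (i - 1) := by
          have hb : lam (i - 1 + 1) = lam i := congrArg lam (by omega)
          omega
        have hadm_L : IsAdmissibleIndex ε lam (i - 1) := Or.inl ⟨by omega, t⟩
        by_cases hc3 : lam i + 4 ≤ lam (i - 1)
        · -- reduction R3a : Case 1 at i−1 keeps the bad step at i
          have e := ksOut1 (lam := lam) (i := i - 1) t
          have hts' : IsTwoStep ε (ksOut lam (i - 1)) i := by
            refine ⟨hi1, ?_, ?_, ?_, ?_, ?_, ?_⟩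
            · rw [e (i + 1), if_neg (by omega)]; exact hip
            · rw [e (i + 1), e i, if_neg (by omega), if_neg (by omega)]; exact hile
            · rw [e i, if_neg (by omega)]; exact his
            · rw [e (i + 1), if_neg (by omega)]; exact his1
            · rw [e (i - 1), e i, if_pos le_rfl, if_neg (by omega)]; omega
            · rw [e (i + 1), e (i + 2), if_neg (by omega), if_neg (by omega)]; exact hne1
          have hbad' : IsBadStep (ksOut lam (i - 1)) i := by
            refine Or.inl ⟨hld.1, ?_⟩
            rw [e (i - 1), e i, if_pos le_rfl, if_neg (by omega)]
            rw [Nat.even_iff]; omega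
          obtain ⟨l₁, l₂, h1, h2, h3⟩ := ih (ksOut lam (i - 1)) (hg.ksOut hadm_L)
            (by have := msum_lt hg hadm_L; omega) i hts' hbad'
          exact ⟨(i - 1) :: l₁, (i - 1) :: l₂, maximal_cons.mpr ⟨hadm_L, h1⟩,
            maximal_cons.mpr ⟨hadm_L, h2⟩, fun hp => h3 hp.cons_inv⟩
        · -- crux L : left gap exactly 2
          have hgap : lam (i - 1) = lam i + 2 := by omega
          have hgμ := hg.ksOut hadm_L
          have hgν := hg.ksOut hadm_i
          obtain ⟨A, hA⟩ := exists_maximal (ε := ε) S (ksOut lam (i - 1)) hgμ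
            (by have := msum_lt hg hadm_L; omega)
          obtain ⟨B, hB⟩ := exists_maximal (ε := ε) S (ksOut lam i) hgν
            (by have := msum_lt hg hadm_i; omega)
          refine ⟨(i - 1) :: A, i :: B, maximal_cons.mpr ⟨hadm_L, hA⟩,
            maximal_cons.mpr ⟨hadm_i, hB⟩, ?_⟩
          intro hp
          have eμ := ksOut1 (lam := lam) (i := i - 1) t
          have hq1 : ksOut lam (i - 1) (i - 1) = ksOut lam (i - 1) i := by
            rw [eμ (i - 1), eμ i, if_pos le_rfl, if_neg (by omega)]; omega
          have hq2 : ksOut lam (i - 1) i = ksOut lam (i - 1) (i + 1) := by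
            rw [eμ i, eμ (i + 1), if_neg (by omega), if_neg (by omega)]; exact heqi
          have hnotin : i ∉ A :=
            avoidL_seq (by omega) A (ksOut lam (i - 1)) hgμ hq1 hq2 hA.1
          have hmem : i ∈ (i - 1) :: A := hp.mem_iff.mpr List.mem_cons_self
          rcases List.mem_cons.mp hmem with hh | hh
          · omega
          · exact hnotin hh

end KSAux

/-- `λ ∈ 𝒫_ε(N)` is non-singular if and only if any two maximal admissible sequences
for `λ` have the same length and are conjugate under the symmetric group, i.e. each is a
rearrangement of the other. -/
theorem stmt18 (ε : ℤ) (hε : ε = 1 ∨ ε = -1) (N n : ℕ) (lam : ℕ → ℕ)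
    (hlam : KSPartition ε N n lam) :
    NonSingular ε lam ↔
      ∀ l₁ l₂ : List ℕ, IsMaximalAdmissibleSeq ε lam l₁ →
        IsMaximalAdmissibleSeq ε lam l₂ → l₁.Perm l₂ := by
  have hgood : KSAux.Good n lam := ⟨hlam.zero, hlam.mono, hlam.top⟩
  constructor
  · intro hns l₁ l₂ h₁ h₂
    exact KSAux.forward (∑ p ∈ Finset.Icc 1 n, lam p) lam hgood le_rfl hns l₁ l₂ h₁ h₂
  · intro hR i hts hbad
    obtain ⟨l₁, l₂, h1, h2, h3⟩ := KSAux.backward (∑ p ∈ Finset.Icc 1 n, lam p) lam hgood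
      le_rfl i hts hbad
    exact h3 (hR l₁ l₂ h1 h2)
end
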